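/- arXiv:1903.06842 — 7 statements merged into one kernel-verified Lean document; each statement's English description precedes it below -/
import Mathlib

section
/- Let A ∈ R^{n×n}, B ∈ R^{n×m}, and let U0 ∈ R^{m×T}, X0 ∈ R^{n×T} be such that the stacked matrix [U0; X0] has full row rank n+m. Define X1 := B·U0 + A·X0. Then for any K ∈ R^{m×n} there exists G ∈ R^{T×n} with U0·G = K and X0·G = I_n, and for any such G one has A + B·K = X1·G. -/
open Matrix

theorem stmt_1 (n m T : ℕ)
    (A : Matrix (Fin n) (Fin n) ℝ) (B : Matrix (Fin n) (Fin m) ℝ)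
    (U0 : Matrix (Fin m) (Fin T) ℝ) (X0 : Matrix (Fin n) (Fin T) ℝ)
    (hrank : (Matrix.fromRows U0 X0).rank = n + m)
    (X1 : Matrix (Fin n) (Fin T) ℝ) (hX1 : X1 = B * U0 + A * X0) :
    ∀ K : Matrix (Fin m) (Fin n) ℝ,
      (∃ G : Matrix (Fin T) (Fin n) ℝ, U0 * G = K ∧ X0 * G = 1) ∧
      (∀ G : Matrix (Fin T) (Fin n) ℝ, U0 * G = K → X0 * G = 1 →
        A + B * K = X1 * G) := by
  intro K
  constructor
  · -- existence
    set M := Matrix.fromRows U0 X0 with hM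
    have hsurj : Function.Surjective M.mulVecLin := by
      rw [← LinearMap.range_eq_top]
      apply Submodule.eq_top_of_finrank_eq
      rw [← Matrix.rank, hrank]
      simp [Module.finrank_pi, Nat.add_comm]
    -- target matrix
    set Y : Matrix (Fin m ⊕ Fin n) (Fin n) ℝ := Matrix.fromRows K 1 with hY
    have hcols : ∀ j : Fin n, ∃ v : Fin T → ℝ, M.mulVec v = fun i => Y i j := by
      intro j; exact hsurj _
    choose v hv using hcols
    refine ⟨Matrix.of fun t j => v j t, ?_, ?_⟩ <;>
    · ext i j
      have := congrFun (hv j) (by first | exact Sum.inl i | exact Sum.inr i)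
      simpa [Matrix.mul_apply, Matrix.mulVec, dotProduct, Y, M] using this
  · intro G h1 h2
    rw [hX1, Matrix.add_mul, Matrix.mul_assoc, Matrix.mul_assoc, h1, h2,
      Matrix.mul_one, add_comm]
end

section
/- Let A ∈ R^{n×n}, B ∈ R^{n×m}, U0 ∈ R^{m×T}, X0 ∈ R^{n×T} with [U0; X0] of full row rank, and X1 := B·U0 + A·X0. If Q ∈ R^{T×n} satisfies the block matrix [[X0·Q, X1·Q],[Qᵀ·X1ᵀ, X0·Q]] ≻ 0 (positive definite), then with K := U0·Q·(X0·Q)^{-1}, the matrix A + B·K is Schur stable, i.e., all its eigenvalues have modulus strictly less than 1. -/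
open Matrix
open scoped ComplexOrder

open scoped MatrixOrder in
lemma posDef_map_complex {k : Type*} [Fintype k] [DecidableEq k]
    {P : Matrix k k ℝ} (hP : P.PosDef) : (P.map (algebraMap ℝ ℂ)).PosDef := by
  have hps := hP.posSemidef
  set L := CFC.sqrt P with hLdef
  have hLL : L * L = P := CFC.sqrt_mul_sqrt_self P (nonneg_iff_posSemidef.mpr hps)
  have hLH : Lᴴ = L := (nonneg_iff_posSemidef.mp (CFC.sqrt_nonneg P)).1
  have hmap : P.map (algebraMap ℝ ℂ) = (L.map (algebraMap ℝ ℂ))ᴴ * (L.map (algebraMap ℝ ℂ)) := by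
    rw [← Matrix.conjTranspose_map (A := L) (algebraMap ℝ ℂ) (by intro x; simp), hLH,
      ← Matrix.map_mul, hLL]
  have hdet : (L.map (algebraMap ℝ ℂ)).det ≠ 0 := by
    have h2 : L.det * L.det ≠ 0 := by
      have hd : (L * L).det = P.det := by rw [hLL]
      rw [det_mul] at hd
      rw [hd]; exact hP.det_pos.ne'
    have he : (L.map (algebraMap ℝ ℂ)).det = algebraMap ℝ ℂ L.det := (RingHom.map_det _ L).symm
    rw [he]
    simpa using (mul_ne_zero_iff.mp h2).1
  refine Matrix.PosDef.of_dotProduct_mulVec_pos (hmap ▸ (posSemidef_conjTranspose_mul_self _).1) fun x hx => ?_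
  rw [hmap, ← mulVec_mulVec, dotProduct_mulVec, vecMul_conjTranspose, star_star]
  have hne : (L.map (algebraMap ℝ ℂ)) *ᵥ x ≠ 0 := by
    have hinj := Matrix.mulVec_injective_iff_isUnit.mpr
      ((Matrix.isUnit_iff_isUnit_det _).mpr (isUnit_iff_ne_zero.mpr hdet))
    intro h
    exact hx (hinj (by simpa using h))
  exact Matrix.dotProduct_star_self_pos_iff.mpr hne

lemma exists_left_eigvec {k : Type*} [Fintype k] [DecidableEq k]
    (Mc : Matrix k k ℂ) (μ : ℂ) (hμ : μ ∈ spectrum ℂ Mc) :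
    ∃ v : k → ℂ, v ≠ 0 ∧ Mcᵀ *ᵥ v = μ • v := by
  rw [spectrum.mem_iff] at hμ
  have hdet : (algebraMap ℂ (Matrix k k ℂ) μ - Mc).det = 0 := by
    by_contra h
    exact hμ ((Matrix.isUnit_iff_isUnit_det _).mpr (isUnit_iff_ne_zero.mpr h))
  have hdetT : ((algebraMap ℂ (Matrix k k ℂ) μ - Mc)ᵀ).det = 0 := by
    rwa [det_transpose]
  obtain ⟨v, hv, hveq⟩ := (Matrix.exists_mulVec_eq_zero_iff).mpr hdetT
  refine ⟨v, hv, ?_⟩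
  have : (algebraMap ℂ (Matrix k k ℂ) μ)ᵀ *ᵥ v - Mcᵀ *ᵥ v = 0 := by
    rw [← sub_mulVec, ← transpose_sub]; exact hveq
  have h1 : (algebraMap ℂ (Matrix k k ℂ) μ)ᵀ *ᵥ v = μ • v := by
    have : algebraMap ℂ (Matrix k k ℂ) μ = μ • (1 : Matrix k k ℂ) := by
      rw [Algebra.algebraMap_eq_smul_one]
    rw [this, transpose_smul, transpose_one, smul_mulVec, one_mulVec]
  rw [h1] at this
  exact (sub_eq_zero.mp this).symm


/-- A real square matrix is Schur stable if all of its (complex) eigenvalues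
have modulus strictly less than one. -/
def SchurStable {n : ℕ} (M : Matrix (Fin n) (Fin n) ℝ) : Prop :=
  ∀ μ ∈ spectrum ℂ (M.map (algebraMap ℝ ℂ)), ‖μ‖ < 1

theorem stmt_2 (n m T : ℕ)
    (A : Matrix (Fin n) (Fin n) ℝ) (B : Matrix (Fin n) (Fin m) ℝ)
    (U0 : Matrix (Fin m) (Fin T) ℝ) (X0 : Matrix (Fin n) (Fin T) ℝ)
    (hrank : (Matrix.fromRows U0 X0).rank = n + m)
    (X1 : Matrix (Fin n) (Fin T) ℝ) (hX1 : X1 = B * U0 + A * X0)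
    (Q : Matrix (Fin T) (Fin n) ℝ)
    (hLMI : (Matrix.fromBlocks (X0 * Q) (X1 * Q) (Qᵀ * X1ᵀ) (X0 * Q)).PosDef) :
    SchurStable (A + B * (U0 * Q * (X0 * Q)⁻¹)) := by
  set P := X0 * Q with hPdef
  set M := A + B * (U0 * Q * P⁻¹) with hMdef
  -- conjugate transpose over ℝ is transpose
  have hCT : Qᵀ * X1ᵀ = (X1 * Q)ᴴ := by
    ext i j
    simp [conjTranspose_apply, transpose_apply, mul_apply, mul_comm]
  rw [hCT] at hLMI
  -- P is positive definite
  have hPh : P.IsHermitian := by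
    have h := congrArg Matrix.toBlocks₁₁ hLMI.1
    simp only [Matrix.fromBlocks_conjTranspose, Matrix.toBlocks_fromBlocks₁₁] at h
    exact h
  have hP : P.PosDef := by
    refine Matrix.PosDef.of_dotProduct_mulVec_pos hPh fun x hx => ?_
    have hxz : (x ⊕ᵥ (0 : Fin n → ℝ)) ≠ 0 := by
      intro h; exact hx (funext fun i => congrFun h (Sum.inl i))
    have := hLMI.dotProduct_mulVec_pos hxz
    simpa [Matrix.fromBlocks_mulVec, Function.star_sumElim, sumElim_dotProduct_sumElim]
      using this
  have hPunit : IsUnit P.det := isUnit_iff_ne_zero.mpr hP.det_pos.ne'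
  haveI : Invertible P := hP.isUnit.invertible
  -- X1 * Q = M * P
  have hX1Q : X1 * Q = M * P := by
    have hB : B * (U0 * Q * P⁻¹) * P = B * (U0 * Q) := by
      rw [Matrix.mul_assoc B, Matrix.mul_assoc (U0 * Q), Matrix.nonsing_inv_mul _ hPunit,
        Matrix.mul_one]
    rw [hMdef, add_mul, hB, hX1, Matrix.add_mul, hPdef, Matrix.mul_assoc, Matrix.mul_assoc, add_comm]
  -- Schur complement positive definite
  have hS : (P - (X1 * Q) * P⁻¹ * (X1 * Q)ᴴ).PosDef := by
    refine Matrix.PosDef.of_dotProduct_mulVec_pos ((Matrix.IsHermitian.fromBlocks₂₂ _ _ hPh).mp hLMI.1) fun x hx => ?_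
    set y : Fin n → ℝ := -((P⁻¹ * (X1 * Q)ᴴ) *ᵥ x) with hy
    have hxz : (x ⊕ᵥ y) ≠ 0 := by
      intro h; exact hx (funext fun i => congrFun h (Sum.inl i))
    have h2 := hLMI.dotProduct_mulVec_pos hxz
    rw [dotProduct_mulVec, Matrix.schur_complement_eq₂₂ _ _ _ _ hPh] at h2
    rw [hy] at h2
    simp only [add_neg_cancel, star_zero, zero_vecMul, zero_dotProduct, zero_add] at h2
    rwa [← dotProduct_mulVec] at h2
  -- simplify Schur complement
  have hSc : P - (X1 * Q) * P⁻¹ * (X1 * Q)ᴴ = P - M * P * Mᵀ := by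
    rw [hX1Q, conjTranspose_mul]
    have hPH : Pᴴ = P := hPh
    have hMH : Mᴴ = Mᵀ := by ext i j; simp [conjTranspose_apply]
    rw [hPH, hMH]
    rw [Matrix.mul_assoc (M * P), ← Matrix.mul_assoc P⁻¹, Matrix.nonsing_inv_mul _ hPunit,
      Matrix.one_mul, ← Matrix.mul_assoc]
  rw [hSc] at hS
  -- now the complex eigenvalue argument
  intro μ hμ
  have hPc : (P.map (algebraMap ℝ ℂ)).PosDef := posDef_map_complex hP
  have hSc2 : ((P - M * P * Mᵀ).map (algebraMap ℝ ℂ)).PosDef := posDef_map_complex hS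
  obtain ⟨v, hv, hveq⟩ := exists_left_eigvec (M.map (algebraMap ℝ ℂ)) μ hμ
  set Mc := M.map (algebraMap ℝ ℂ) with hMc
  set Pc := P.map (algebraMap ℝ ℂ) with hPcd
  have hmapS : (P - M * P * Mᵀ).map (algebraMap ℝ ℂ) = Pc - Mc * Pc * Mcᵀ := by
    rw [Matrix.map_sub _ (map_sub _), Matrix.map_mul (L := M * P) (M := Mᵀ),
      Matrix.map_mul (L := M) (M := P), Matrix.transpose_map]
  have hMcH : Mcᴴ = Mcᵀ := by
    ext i j
    simp [hMc, conjTranspose_apply, Matrix.map_apply]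
  set t := star v ⬝ᵥ Pc *ᵥ v with ht'
  have ht : 0 < t := hPc.dotProduct_mulVec_pos hv
  have hq : 0 < star v ⬝ᵥ (Pc - Mc * Pc * Mcᵀ) *ᵥ v := by
    have := hSc2.dotProduct_mulVec_pos hv; rwa [hmapS] at this
  have key : star v ⬝ᵥ (Mc * Pc * Mcᵀ) *ᵥ v = (starRingEnd ℂ) μ * (μ * t) := by
    have h1 : (Mc * Pc * Mcᵀ) *ᵥ v = Mc *ᵥ (μ • (Pc *ᵥ v)) := by
      rw [← mulVec_mulVec, ← mulVec_mulVec, hveq, mulVec_smul]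
    have h2 : star v ᵥ* Mc = (starRingEnd ℂ) μ • star v := by
      have : Mc = (Mcᵀ)ᴴ := by rw [← hMcH, conjTranspose_conjTranspose]
      rw [this, ← star_mulVec, hveq, star_smul]
      rfl
    rw [h1, dotProduct_mulVec, h2, smul_dotProduct, dotProduct_smul]
    simp [smul_eq_mul, ← ht', mul_assoc]
  rw [sub_mulVec, dotProduct_sub, key, ← ht'] at hq
  have hconj : (starRingEnd ℂ) μ * (μ * t) = (Complex.normSq μ : ℂ) * t := by
    rw [← mul_assoc, ← Complex.normSq_eq_conj_mul_self]
  rw [hconj] at hq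
  rw [Complex.lt_def] at ht hq
  simp only [Complex.zero_re, Complex.zero_im] at ht hq
  obtain ⟨htre, htim⟩ := ht
  obtain ⟨hqre, _⟩ := hq
  rw [Complex.sub_re, Complex.mul_re, Complex.ofReal_re, Complex.ofReal_im, ← htim] at hqre
  have hns : Complex.normSq μ < 1 := by nlinarith
  have : ‖μ‖ ^ 2 < 1 := by rwa [Complex.sq_norm]
  nlinarith [norm_nonneg μ]
end

section
/- Let A ∈ R^{n×n}, B ∈ R^{n×m}, U0 ∈ R^{m×T}, X0 ∈ R^{n×T} with [U0; X0] of full row rank, and X1 := B·U0 + A·X0. If K ∈ R^{m×n} is such that A + B·K is Schur stable, then there exists Q ∈ R^{T×n} satisfying [[X0·Q, X1·Q],[Qᵀ·X1ᵀ, X0·Q]] ≻ 0 and K = U0·Q·(X0·Q)^{-1}. -/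
open Matrix

open scoped Matrix.Norms.L2Operator in
lemma exists_pow_norm_lt {n : ℕ} (M : Matrix (Fin n) (Fin n) ℝ) (h : SchurStable M) :
    ∃ N : ℕ, 0 < N ∧ ‖(M.map (algebraMap ℝ ℂ)) ^ N‖₊ < 1 := by
  set Mc := M.map (algebraMap ℝ ℂ) with hMc
  haveI : CompleteSpace (Matrix (Fin n) (Fin n) ℂ) := FiniteDimensional.complete ℂ _
  have hrad : spectralRadius ℂ Mc < 1 := by
    rcases (spectrum ℂ Mc).eq_empty_or_nonempty with he | hne
    · rw [spectralRadius, he]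
      simpa using zero_lt_one
    · have := spectrum.spectralRadius_lt_of_forall_lt_of_nonempty hne (r := 1)
        (fun k hk => by
          have := h k hk
          exact_mod_cast this)
      simpa using this
  have hgel := spectrum.pow_nnnorm_pow_one_div_tendsto_nhds_spectralRadius Mc
  have hev : ∀ᶠ N : ℕ in Filter.atTop,
      ((‖Mc ^ N‖₊ : ENNReal) ^ (1 / (N : ℝ)) : ENNReal) < 1 :=
    hgel.eventually_lt_const hrad
  obtain ⟨N, hN1, hN0⟩ := (hev.and (Filter.eventually_gt_atTop 0)).exists
  refine ⟨N, hN0, ?_⟩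
  by_contra hcon
  push_neg at hcon
  have h1 : (1 : ENNReal) ≤ (‖Mc ^ N‖₊ : ENNReal) := by exact_mod_cast hcon
  have : (1 : ENNReal) ≤ ((‖Mc ^ N‖₊ : ENNReal) ^ (1 / (N : ℝ)) : ENNReal) := by
    calc (1:ENNReal) = 1 ^ (1 / (N:ℝ)) := (ENNReal.one_rpow _).symm
    _ ≤ _ := ENNReal.rpow_le_rpow h1 (by positivity)
  exact absurd hN1 (not_lt.mpr this)

open scoped Matrix.Norms.L2Operator in
lemma one_sub_pow_posDef {n : ℕ} (M : Matrix (Fin n) (Fin n) ℝ) (h : SchurStable M) :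
    ∃ N : ℕ, 0 < N ∧ (1 - M ^ N * (M ^ N)ᵀ).PosDef := by
  obtain ⟨N, hN0, hnrm⟩ := exists_pow_norm_lt M h
  refine ⟨N, hN0, ?_⟩
  set C := M ^ N with hC
  have hmap : (M.map (algebraMap ℝ ℂ)) ^ N = C.map (algebraMap ℝ ℂ) := by
    have := map_pow ((algebraMap ℝ ℂ).mapMatrix) M N
    simpa [RingHom.mapMatrix_apply] using this.symm
  set Dc := (Cᵀ).map (algebraMap ℝ ℂ) with hDc
  have hDcH : Dc = (C.map (algebraMap ℝ ℂ))ᴴ := by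
    ext i j
    simp [hDc, Matrix.conjTranspose_apply, Matrix.map_apply, Complex.star_def,
      Complex.conj_ofReal]
  have hDnorm : ‖Dc‖ < 1 := by
    have : ‖Dc‖₊ < 1 := by
      rw [hDcH, Matrix.l2_opNNNorm_conjTranspose, ← hmap]
      exact hnrm
    exact_mod_cast this
  have hDnn : 0 ≤ ‖Dc‖ := norm_nonneg _
  have hnormv : ∀ v : Fin n → ℝ,
      ‖(EuclideanSpace.equiv (Fin n) ℂ).symm (fun i => (v i : ℂ))‖ =
        Real.sqrt (∑ i, v i ^ 2) := by
    intro v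
    rw [EuclideanSpace.norm_eq]
    congr 1
    refine Finset.sum_congr rfl fun i _ => ?_
    simp [Complex.norm_real, sq_abs]
  have hsum : ∀ v : Fin n → ℝ, v ⬝ᵥ v = ∑ i, v i ^ 2 := by
    intro v; simp [dotProduct, pow_two]
  have hCCt : (C * Cᵀ).IsHermitian := by
    have := Matrix.isHermitian_mul_conjTranspose_self C
    rwa [Matrix.conjTranspose_eq_transpose_of_trivial] at this
  refine Matrix.PosDef.of_dotProduct_mulVec_pos (Matrix.isHermitian_one.sub hCCt) fun x hx => ?_
  set y := Cᵀ *ᵥ x with hy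
  -- complex norm bound
  have key : ∑ i, y i ^ 2 < ∑ i, x i ^ 2 := by
    set xE : EuclideanSpace ℂ (Fin n) :=
      (EuclideanSpace.equiv (Fin n) ℂ).symm (fun i => (x i : ℂ)) with hxE
    have hb := Matrix.l2_opNorm_mulVec Dc xE
    have hmv : Dc *ᵥ xE = fun i => (y i : ℂ) := by
      funext i
      simp only [Matrix.mulVec, dotProduct, hDc, Matrix.map_apply, hy, hxE]
      push_cast
      rfl
    rw [hmv, hxE] at hb
    rw [hnormv, hnormv] at hb
    have hxpos : 0 < ∑ i, x i ^ 2 := by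
      obtain ⟨i, hi⟩ := Function.ne_iff.mp hx
      exact Finset.sum_pos' (fun j _ => sq_nonneg _) ⟨i, Finset.mem_univ i, sq_pos_of_ne_zero hi⟩
    have hlt : Real.sqrt (∑ i, y i ^ 2) < Real.sqrt (∑ i, x i ^ 2) := by
      refine lt_of_le_of_lt hb ?_
      have hsq : 0 < Real.sqrt (∑ i, x i ^ 2) := Real.sqrt_pos.mpr hxpos
      nlinarith
    have := (Real.sqrt_lt_sqrt_iff (by positivity)).mp hlt
    exact this
  have hq : x ⬝ᵥ ((1 - C * Cᵀ) *ᵥ x) = x ⬝ᵥ x - y ⬝ᵥ y := by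
    rw [Matrix.sub_mulVec, Matrix.one_mulVec, dotProduct_sub]
    congr 1
    rw [← Matrix.mulVec_mulVec, Matrix.dotProduct_mulVec, ← Matrix.mulVec_transpose, hy]
  have : 0 < x ⬝ᵥ ((1 - C * Cᵀ) *ᵥ x) := by
    rw [hq, hsum, hsum]
    linarith
  simpa using this


lemma lyapunov {n : ℕ} (M : Matrix (Fin n) (Fin n) ℝ) (h : SchurStable M) :
    ∃ P : Matrix (Fin n) (Fin n) ℝ, P.PosDef ∧ Pᵀ = P ∧ (P - M * P * Mᵀ).PosDef := by
  obtain ⟨N, hN0, hN⟩ := one_sub_pow_posDef M h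
  obtain ⟨N', rfl⟩ : ∃ N', N = N' + 1 := ⟨N - 1, by omega⟩
  set f : ℕ → Matrix (Fin n) (Fin n) ℝ := fun j => M ^ j * (M ^ j)ᵀ with hf
  have hfsemi : ∀ j, (f j).PosSemidef := by
    intro j
    have := Matrix.posSemidef_self_mul_conjTranspose (M ^ j)
    rwa [Matrix.conjTranspose_eq_transpose_of_trivial] at this
  have hf0 : f 0 = 1 := by simp [hf]
  refine ⟨∑ j ∈ Finset.range (N' + 1), f j, ?_, ?_, ?_⟩
  · rw [Finset.sum_range_succ']
    refine Matrix.PosDef.posSemidef_add ?_ (by rw [hf0]; exact Matrix.PosDef.one)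
    exact Finset.sum_induction _ _ (fun a b ha hb => ha.add hb)
      (Matrix.PosSemidef.zero) (fun i _ => hfsemi _)
  · rw [Matrix.transpose_sum]
    refine Finset.sum_congr rfl fun j _ => ?_
    simp [hf, Matrix.transpose_mul]
  · have hMP : M * (∑ j ∈ Finset.range (N' + 1), f j) * Mᵀ
        = ∑ j ∈ Finset.range (N' + 1), f (j + 1) := by
      rw [Finset.mul_sum, Finset.sum_mul]
      refine Finset.sum_congr rfl fun j _ => ?_
      simp only [hf]
      rw [pow_succ']
      rw [Matrix.transpose_mul]
      noncomm_ring
    rw [hMP, Finset.sum_range_succ', Finset.sum_range_succ, hf0]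
    have : ∀ S T : Matrix (Fin n) (Fin n) ℝ, (S + 1) - (S + T) = 1 - T := by
      intro S T; abel
    rw [this]
    exact hN

open scoped Matrix in
lemma fromBlocks_posDef {n : ℕ} {P M : Matrix (Fin n) (Fin n) ℝ}
    (hP : P.PosDef) (hPs : Pᵀ = P) (hL : (P - M * P * Mᵀ).PosDef) :
    (Matrix.fromBlocks P (M * P) (M * P)ᴴ P).PosDef := by
  haveI := hP.isUnit.invertible
  have hdet : IsUnit P.det := hP.det_pos.ne'.isUnit
  have h1 : P * P⁻¹ = 1 := Matrix.mul_nonsing_inv _ hdet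
  have hBDBH : M * P * P⁻¹ * (M * P)ᴴ = M * P * Mᵀ := by
    rw [Matrix.conjTranspose_eq_transpose_of_trivial, Matrix.transpose_mul, hPs,
      Matrix.mul_assoc M P P⁻¹, h1, Matrix.mul_one, ← Matrix.mul_assoc]
  rw [Matrix.posDef_iff_dotProduct_mulVec]
  constructor
  · rw [Matrix.IsHermitian.fromBlocks₂₂ _ _ hP.isHermitian, hBDBH]
    exact hL.isHermitian
  · intro z hz
    set x := z ∘ Sum.inl with hx
    set y := z ∘ Sum.inr with hy
    have hzelim : z = x ⊕ᵥ y := (Sum.elim_comp_inl_inr z).symm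
    have hsc := Matrix.schur_complement_eq₂₂ (D := P) P (M * P) x y
      hP.isHermitian
    rw [hBDBH] at hsc
    rw [Matrix.dotProduct_mulVec, hzelim, hsc]
    by_cases hxz : x = 0
    · have hyz : y ≠ 0 := by
        intro hyy
        apply hz
        rw [hzelim, hxz, hyy]
        ext (i | i) <;> rfl
      have h2 : star x ᵥ* (P - M * P * Mᵀ) ⬝ᵥ x = 0 := by
        simp [hxz]
      have h3 : (P⁻¹ * (M * P)ᴴ) *ᵥ x + y = y := by
        simp [hxz]
      rw [h2, h3, add_zero]
      have := hP.dotProduct_mulVec_pos hyz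
      rwa [Matrix.dotProduct_mulVec] at this
    · have h2 : 0 < star x ᵥ* (P - M * P * Mᵀ) ⬝ᵥ x := by
        have := hL.dotProduct_mulVec_pos hxz
        rwa [Matrix.dotProduct_mulVec] at this
      have h3 : 0 ≤ star ((P⁻¹ * (M * P)ᴴ) *ᵥ x + y) ᵥ* P ⬝ᵥ ((P⁻¹ * (M * P)ᴴ) *ᵥ x + y) := by
        have := hP.posSemidef.dotProduct_mulVec_nonneg ((P⁻¹ * (M * P)ᴴ) *ᵥ x + y)
        rwa [Matrix.dotProduct_mulVec] at this
      linarith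

lemma exists_right_inv {T : ℕ} {ι : Type} [Fintype ι] [DecidableEq ι]
    (W : Matrix ι (Fin T) ℝ) (h : W.rank = Fintype.card ι) :
    ∃ G : Matrix (Fin T) ι ℝ, W * G = 1 := by
  have hrange : LinearMap.range W.mulVecLin = ⊤ := by
    apply Submodule.eq_top_of_finrank_eq
    rw [show Module.finrank ℝ ↥(LinearMap.range W.mulVecLin) = W.rank from rfl, h,
      Module.finrank_pi]
  have hsurj := LinearMap.range_eq_top.mp hrange
  choose g hg using fun j => hsurj (Pi.single j 1)
  refine ⟨Matrix.of fun k j => g j k, ?_⟩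
  ext i j
  have hgj := congrFun (hg j) i
  simp only [Matrix.mulVecLin_apply, Matrix.mulVec, dotProduct] at hgj
  rw [Matrix.mul_apply]
  simp only [Matrix.of_apply]
  rw [hgj, Pi.single_apply, Matrix.one_apply]

theorem stmt_3 (n m T : ℕ)
    (A : Matrix (Fin n) (Fin n) ℝ) (B : Matrix (Fin n) (Fin m) ℝ)
    (U0 : Matrix (Fin m) (Fin T) ℝ) (X0 : Matrix (Fin n) (Fin T) ℝ)
    (hrank : (Matrix.fromRows U0 X0).rank = n + m)
    (X1 : Matrix (Fin n) (Fin T) ℝ) (hX1 : X1 = B * U0 + A * X0)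
    (K : Matrix (Fin m) (Fin n) ℝ)
    (hK : SchurStable (A + B * K)) :
    ∃ Q : Matrix (Fin T) (Fin n) ℝ,
      (Matrix.fromBlocks (X0 * Q) (X1 * Q) (Qᵀ * X1ᵀ) (X0 * Q)).PosDef ∧
      K = U0 * Q * (X0 * Q)⁻¹ := by
  obtain ⟨G, hG⟩ := exists_right_inv (Matrix.fromRows U0 X0)
    (by rw [hrank]; simp [add_comm])
  set Gl : Matrix (Fin T) (Fin m) ℝ := Matrix.of fun k i => G k (Sum.inl i) with hGl
  set Gr : Matrix (Fin T) (Fin n) ℝ := Matrix.of fun k i => G k (Sum.inr i) with hGr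
  have hentry : ∀ (a b : Fin m ⊕ Fin n),
      (Matrix.fromRows U0 X0 * G) a b = (1 : Matrix _ _ ℝ) a b :=
    fun a b => by rw [hG]
  have hU0Gl : U0 * Gl = 1 := by
    ext i j
    have := hentry (Sum.inl i) (Sum.inl j)
    simpa [Matrix.mul_apply, Matrix.one_apply, Sum.inl.injEq, hGl] using this
  have hU0Gr : U0 * Gr = 0 := by
    ext i j
    have := hentry (Sum.inl i) (Sum.inr j)
    simpa [Matrix.mul_apply, Matrix.one_apply, hGr] using this
  have hX0Gl : X0 * Gl = 0 := by
    ext i j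
    have := hentry (Sum.inr i) (Sum.inl j)
    simpa [Matrix.mul_apply, Matrix.one_apply, hGl] using this
  have hX0Gr : X0 * Gr = 1 := by
    ext i j
    have := hentry (Sum.inr i) (Sum.inr j)
    simpa [Matrix.mul_apply, Matrix.one_apply, Sum.inr.injEq, hGr] using this
  obtain ⟨P, hP, hPs, hLyap⟩ := lyapunov (A + B * K) hK
  set M := A + B * K with hM
  refine ⟨(Gl * K + Gr) * P, ?_, ?_⟩
  all_goals {
    have hX0Q : X0 * ((Gl * K + Gr) * P) = P := by
      rw [← Matrix.mul_assoc, Matrix.mul_add, ← Matrix.mul_assoc, hX0Gl, hX0Gr,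
        Matrix.zero_mul, zero_add, Matrix.one_mul]
    have hU0Q : U0 * ((Gl * K + Gr) * P) = K * P := by
      rw [← Matrix.mul_assoc, Matrix.mul_add, ← Matrix.mul_assoc, hU0Gl, hU0Gr,
        Matrix.one_mul, add_zero]
    have hX1Q : X1 * ((Gl * K + Gr) * P) = M * P := by
      rw [hX1, Matrix.add_mul, Matrix.mul_assoc, hU0Q, Matrix.mul_assoc, hX0Q, hM,
        Matrix.add_mul, ← Matrix.mul_assoc, add_comm]
    first
    | { -- positive definiteness
        rw [hX0Q, hX1Q,
          show ((Gl * K + Gr) * P)ᵀ * X1ᵀ = (X1 * ((Gl * K + Gr) * P))ᵀ from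
            (Matrix.transpose_mul _ _).symm,
          hX1Q, ← Matrix.conjTranspose_eq_transpose_of_trivial]
        exact fromBlocks_posDef hP hPs hLyap }
    | { -- gain recovery
        rw [hU0Q, hX0Q, Matrix.mul_assoc,
          Matrix.mul_nonsing_inv _ hP.det_pos.ne'.isUnit, Matrix.mul_one] }
  }
end

section
/- Let A ∈ R^{n×n}, B ∈ R^{n×m}. Let Z0, Z1 ∈ R^{n×T}, U0 ∈ R^{m×T}, and R0 ∈ R^{n×T} satisfy: [U0; Z0] has full row rank, and B·U0 + A·Z0 = Z1 + R0. Suppose there exist Q ∈ R^{T×n} and α > 0 such that [[Z0·Q − α·Z1·Z1ᵀ, Z1·Q],[Qᵀ·Z1ᵀ, Z0·Q]] ≻ 0 and [[I_T, Q],[Qᵀ, Z0·Q]] ≻ 0. If moreover R0·R0ᵀ ⪯ γ·Z1·Z1ᵀ with γ < α²/(4 + 2α), then K := U0·Q·(Z0·Q)^{-1} renders A + B·K Schur stable. -/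
open Matrix

namespace Stmt7Aux

variable {p q k : ℕ}




lemma dot_self_nonneg (x : Fin p → ℝ) : 0 ≤ x ⬝ᵥ x :=
  Finset.sum_nonneg fun i _ => mul_self_nonneg _

lemma posdef_block22 {A : Matrix (Fin p) (Fin p) ℝ} {B : Matrix (Fin p) (Fin q) ℝ}
    {C : Matrix (Fin q) (Fin p) ℝ} {D : Matrix (Fin q) (Fin q) ℝ}
    (h : (fromBlocks A B C D).PosDef) : D.PosDef := by
  rw [posDef_iff_dotProduct_mulVec]; constructor
  · have := h.1
    rw [isHermitian_fromBlocks_iff] at this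
    exact this.2.2.2
  · intro x hx
    have hx' : (Sum.elim (0 : Fin p → ℝ) x) ≠ 0 := by
      intro hcon
      exact hx (funext fun i => congrFun hcon (Sum.inr i))
    have := h.dotProduct_mulVec_pos hx'
    simpa [fromBlocks_mulVec, dotProduct, Fintype.sum_sum_type, mulVec_zero] using this

lemma schur22 {A : Matrix (Fin p) (Fin p) ℝ} (B : Matrix (Fin p) (Fin q) ℝ)
    {D : Matrix (Fin q) (Fin q) ℝ} (hD : D.PosDef)
    (h : (fromBlocks A B Bᴴ D).PosDef) : (A - B * D⁻¹ * Bᴴ).PosDef := by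
  haveI := hD.isUnit.invertible
  rw [posDef_iff_dotProduct_mulVec]; constructor
  · exact (IsHermitian.fromBlocks₂₂ A B hD.1).mp h.1
  · intro x hx
    have key := schur_complement_eq₂₂ A B x (-((D⁻¹ * Bᴴ) *ᵥ x)) hD.1
    have h2 := h.dotProduct_mulVec_pos (x := Sum.elim x (-((D⁻¹ * Bᴴ) *ᵥ x)))
      (by intro hcon; exact hx (funext fun i => congrFun hcon (Sum.inl i)))
    rw [dotProduct_mulVec] at h2
    rw [key] at h2
    simpa [dotProduct_mulVec] using h2





lemma quad_map (S : Matrix (Fin k) (Fin k) ℝ) (hS : Sᵀ = S) (v : Fin k → ℂ) :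
    star v ⬝ᵥ ((S.map (algebraMap ℝ ℂ)) *ᵥ v) =
      (((fun i => (v i).re) ⬝ᵥ (S *ᵥ fun i => (v i).re)
        + (fun i => (v i).im) ⬝ᵥ (S *ᵥ fun i => (v i).im) : ℝ) : ℂ) := by
  set f := algebraMap ℝ ℂ
  set Sc := S.map f with hSc
  set a : Fin k → ℝ := fun i => (v i).re
  set b : Fin k → ℝ := fun i => (v i).im
  set c : Fin k → ℂ := fun i => (a i : ℂ)
  set d : Fin k → ℂ := fun i => (b i : ℂ)
  have hScT : Scᵀ = Sc := by rw [hSc, ← Matrix.transpose_map, hS]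
  have hsymm : ∀ (u w : Fin k → ℂ), u ⬝ᵥ Sc *ᵥ w = w ⬝ᵥ Sc *ᵥ u := by
    intro u w
    rw [dotProduct_mulVec, ← mulVec_transpose, hScT, dotProduct_comm]
  have hv : v = c + Complex.I • d := by
    funext i
    simp only [Pi.add_apply, Pi.smul_apply, smul_eq_mul, c, d, a, b]
    rw [mul_comm]
    exact (Complex.re_add_im (v i)).symm
  have hstar : star v = c - Complex.I • d := by
    funext i
    simp only [Pi.star_apply, Pi.sub_apply, Pi.smul_apply, smul_eq_mul, c, d, a, b]
    rw [hv]
    simp [Complex.ext_iff]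
    ring
  have hmapdot : ∀ (u w : Fin k → ℝ), ((u ⬝ᵥ S *ᵥ w : ℝ) : ℂ)
      = (fun i => (u i : ℂ)) ⬝ᵥ Sc *ᵥ (fun i => (w i : ℂ)) := by
    intro u w
    have h1 : (f (u ⬝ᵥ S *ᵥ w)) = (f ∘ u) ⬝ᵥ (f ∘ (S *ᵥ w)) := RingHom.map_dotProduct f _ _
    have h2 : f ∘ (S *ᵥ w) = Sc *ᵥ (f ∘ w) := funext fun i => RingHom.map_mulVec f S w i
    rw [h2] at h1
    simp only [f, Complex.coe_algebraMap] at h1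
    exact h1
  rw [hstar]
  conv_lhs => rw [hv]
  rw [mulVec_add, dotProduct_add, sub_dotProduct, sub_dotProduct]
  rw [mulVec_smul, dotProduct_smul, dotProduct_smul, smul_dotProduct, smul_dotProduct]
  have hcross : d ⬝ᵥ Sc *ᵥ c = c ⬝ᵥ Sc *ᵥ d := hsymm d c
  push_cast
  rw [hmapdot a a, hmapdot b b]
  simp only [smul_eq_mul, hcross]
  ring_nf
  simp [Complex.I_sq]
  try ring






lemma quad_pos {S : Matrix (Fin k) (Fin k) ℝ} (hS : S.PosDef) {v : Fin k → ℂ} (hv : v ≠ 0)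
    (hq : star v ⬝ᵥ ((S.map (algebraMap ℝ ℂ)) *ᵥ v) =
      (((fun i => (v i).re) ⬝ᵥ (S *ᵥ fun i => (v i).re)
        + (fun i => (v i).im) ⬝ᵥ (S *ᵥ fun i => (v i).im) : ℝ) : ℂ)) :
    0 < (star v ⬝ᵥ ((S.map (algebraMap ℝ ℂ)) *ᵥ v)).re ∧
      (star v ⬝ᵥ ((S.map (algebraMap ℝ ℂ)) *ᵥ v)).im = 0 := by
  rw [hq]
  simp only [Complex.ofReal_re, Complex.ofReal_im, and_true]
  set a : Fin k → ℝ := fun i => (v i).re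
  set b : Fin k → ℝ := fun i => (v i).im
  have hab : a ≠ 0 ∨ b ≠ 0 := by
    by_contra hcon
    push_neg at hcon
    apply hv
    funext i
    have h1 := congrFun hcon.1 i
    have h2 := congrFun hcon.2 i
    simp only [a, b, Pi.zero_apply] at h1 h2
    exact Complex.ext h1 h2
  have qa : 0 ≤ a ⬝ᵥ S *ᵥ a := by
    rcases eq_or_ne a 0 with h | h
    · simp [h]
    · exact le_of_lt (by simpa [star_trivial] using hS.dotProduct_mulVec_pos h)
  have qb : 0 ≤ b ⬝ᵥ S *ᵥ b := by
    rcases eq_or_ne b 0 with h | h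
    · simp [h]
    · exact le_of_lt (by simpa [star_trivial] using hS.dotProduct_mulVec_pos h)
  rcases hab with h | h
  · have := hS.dotProduct_mulVec_pos h
    simp only [star_trivial] at this
    linarith
  · have := hS.dotProduct_mulVec_pos h
    simp only [star_trivial] at this
    linarith

lemma lyapunov (M P : Matrix (Fin k) (Fin k) ℝ) (hP : P.PosDef)
    (hPs : Pᵀ = P) (hMs : (M * P * Mᵀ)ᵀ = M * P * Mᵀ)
    (hquadS : ∀ v : Fin k → ℂ, star v ⬝ᵥ ((P.map (algebraMap ℝ ℂ)) *ᵥ v) =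
      (((fun i => (v i).re) ⬝ᵥ (P *ᵥ fun i => (v i).re)
        + (fun i => (v i).im) ⬝ᵥ (P *ᵥ fun i => (v i).im) : ℝ) : ℂ))
    (hquadM : ∀ v : Fin k → ℂ,
      star v ⬝ᵥ (((P - M * P * Mᵀ).map (algebraMap ℝ ℂ)) *ᵥ v) =
      (((fun i => (v i).re) ⬝ᵥ ((P - M * P * Mᵀ) *ᵥ fun i => (v i).re)
        + (fun i => (v i).im) ⬝ᵥ ((P - M * P * Mᵀ) *ᵥ fun i => (v i).im) : ℝ) : ℂ))
    (h : (P - M * P * Mᵀ).PosDef) : SchurStable M := by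
  intro μ hμ
  set f := algebraMap ℝ ℂ
  set Mc := M.map f with hMc
  set Pc := P.map f with hPc
  rw [spectrum.mem_iff] at hμ
  have hdet : (μ • (1 : Matrix (Fin k) (Fin k) ℂ) - Mc).det = 0 := by
    by_contra hc
    exact hμ (by
      rw [Algebra.algebraMap_eq_smul_one]
      exact (isUnit_iff_isUnit_det _).2 (Ne.isUnit hc))
  have hdetT : (μ • (1 : Matrix (Fin k) (Fin k) ℂ) - Mcᵀ).det = 0 := by
    have : (μ • (1 : Matrix (Fin k) (Fin k) ℂ) - Mc)ᵀ
        = μ • (1 : Matrix (Fin k) (Fin k) ℂ) - Mcᵀ := by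
      rw [transpose_sub, transpose_smul, transpose_one]
    rw [← this, det_transpose, hdet]
  obtain ⟨v, hv0, hveq⟩ := (Matrix.exists_mulVec_eq_zero_iff).mpr hdetT
  have heig : Mcᵀ *ᵥ v = μ • v := by
    have := hveq
    rw [sub_mulVec] at this
    have h1 : (μ • (1 : Matrix (Fin k) (Fin k) ℂ)) *ᵥ v = μ • v := by
      rw [smul_mulVec, one_mulVec]
    rw [h1] at this
    exact (sub_eq_zero.mp this).symm
  have hmap : (M * P * Mᵀ).map f = Mc * Pc * Mcᵀ := by
    rw [Matrix.map_mul, Matrix.map_mul, ← Matrix.transpose_map]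
  have hconj : Mcᵀ *ᵥ star v = star (Mcᵀ *ᵥ v) := by
    funext i
    simp [mulVec, dotProduct, hMc, Matrix.map_apply, map_sum, Complex.conj_ofReal, Complex.coe_algebraMap, f]
  have hkey : star v ⬝ᵥ ((M * P * Mᵀ).map f) *ᵥ v
      = ((starRingEnd ℂ) μ * μ) * (star v ⬝ᵥ Pc *ᵥ v) := by
    rw [hmap, ← mulVec_mulVec, ← mulVec_mulVec, dotProduct_mulVec,
      ← mulVec_transpose, hconj, heig]
    rw [star_smul, smul_dotProduct, mulVec_smul, dotProduct_smul]
    simp only [smul_eq_mul, smul_dotProduct, dotProduct_smul, Complex.star_def]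
    ring
  set qP := star v ⬝ᵥ Pc *ᵥ v with hqP
  have hPpos := quad_pos hP hv0 (hquadS v)
  have hSpos := quad_pos h hv0 (hquadM v)
  rw [← hqP] at hPpos
  have hsub : star v ⬝ᵥ ((P - M * P * Mᵀ).map f) *ᵥ v
      = qP - ((starRingEnd ℂ) μ * μ) * qP := by
    have : (P - M * P * Mᵀ).map f = Pc - (M * P * Mᵀ).map f :=
      Matrix.map_sub (⇑f) (map_sub f) P (M * P * Mᵀ)
    rw [this, sub_mulVec, dotProduct_sub, hkey, hqP]
  rw [hsub] at hSpos
  have hmu : (starRingEnd ℂ) μ * μ = ((Complex.normSq μ : ℝ) : ℂ) := by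
    rw [mul_comm, Complex.mul_conj]
  rw [hmu] at hSpos
  have hre : (qP - ((Complex.normSq μ : ℝ) : ℂ) * qP).re
      = (1 - Complex.normSq μ) * qP.re := by
    have him := hPpos.2
    rw [Complex.sub_re, Complex.mul_re]
    simp [him]
    ring
  rw [hre] at hSpos
  have h1 : Complex.normSq μ < 1 := by
    nlinarith [hSpos.1, hPpos.1]
  have h2 : ‖μ‖ ^ 2 < 1 := by
    rw [Complex.sq_norm]
    exact h1
  nlinarith [norm_nonneg μ]


end Stmt7Aux

open Stmt7Aux in
set_option maxHeartbeats 1600000 in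
theorem stmt_7 (n m T : ℕ)
    (A : Matrix (Fin n) (Fin n) ℝ) (B : Matrix (Fin n) (Fin m) ℝ)
    (Z0 Z1 R0 : Matrix (Fin n) (Fin T) ℝ) (U0 : Matrix (Fin m) (Fin T) ℝ)
    (hrank : (Matrix.fromRows U0 Z0).rank = m + n)
    (hdata : B * U0 + A * Z0 = Z1 + R0)
    (Q : Matrix (Fin T) (Fin n) ℝ) (α : ℝ) (hα : 0 < α)
    (hLMI1 : (Matrix.fromBlocks (Z0 * Q - α • (Z1 * Z1ᵀ)) (Z1 * Q)
        (Qᵀ * Z1ᵀ) (Z0 * Q)).PosDef)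
    (hLMI2 : (Matrix.fromBlocks (1 : Matrix (Fin T) (Fin T) ℝ) Q
        Qᵀ (Z0 * Q)).PosDef)
    (γ : ℝ) (hγSNR : (γ • (Z1 * Z1ᵀ) - R0 * R0ᵀ).PosSemidef)
    (hγ : γ < α ^ 2 / (4 + 2 * α)) :
    SchurStable (A + B * (U0 * Q * (Z0 * Q)⁻¹)) := by
  set P := Z0 * Q with hPdef
  -- basic facts about P
  have hPherm : P.IsHermitian := by
    have h := hLMI2.1
    rw [isHermitian_fromBlocks_iff] at h
    exact h.2.2.2
  have hPs : Pᵀ = P := by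
    rw [← conjTranspose_eq_transpose_of_trivial]; exact hPherm
  have hPpos : P.PosDef := posdef_block22 hLMI2
  haveI : Invertible P := hPpos.isUnit.invertible
  have hPinvT : P⁻¹ᵀ = P⁻¹ := by
    rw [transpose_nonsing_inv, hPs]
  -- Schur complement of LMI1
  have hBH : (Qᵀ * Z1ᵀ : Matrix (Fin n) (Fin n) ℝ) = (Z1 * Q)ᴴ := by
    rw [conjTranspose_mul, conjTranspose_eq_transpose_of_trivial,
      conjTranspose_eq_transpose_of_trivial]
  rw [hBH] at hLMI1
  have hSchur : ((P - α • (Z1 * Z1ᵀ)) - (Z1 * Q) * P⁻¹ * (Z1 * Q)ᴴ).PosDef :=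
    schur22 (Z1 * Q) hPpos hLMI1
  -- Schur complement of LMI2 (semidefinite version)
  have hQH : (Qᵀ : Matrix (Fin n) (Fin T) ℝ) = Qᴴ :=
    (conjTranspose_eq_transpose_of_trivial Q).symm
  have hPSD : (P - Qᵀ * Q).PosSemidef := by
    have h := hLMI2.posSemidef
    rw [hQH] at h
    haveI : Invertible (1 : Matrix (Fin T) (Fin T) ℝ) := invertibleOne
    have h2 := (Matrix.PosDef.fromBlocks₁₁ Q P Matrix.PosDef.one).mp h
    rw [inv_one, Matrix.mul_one, ← hQH] at h2
    exact h2
  -- the matrix G = Q P⁻¹ Qᵀ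
  set G := Q * P⁻¹ * Qᵀ with hGdef
  have hGT : Gᵀ = G := by
    rw [hGdef, transpose_mul, transpose_mul, transpose_transpose, hPinvT,
      Matrix.mul_assoc]
  have hGpsd : G.PosSemidef := by
    have h := hPpos.inv.posSemidef.mul_mul_conjTranspose_same Q
    rwa [← hQH] at h
  have hGnn : ∀ x : Fin T → ℝ, 0 ≤ x ⬝ᵥ G *ᵥ x := by
    intro x
    simpa [star_trivial] using hGpsd.dotProduct_mulVec_nonneg x
  have hGsym : ∀ u w : Fin T → ℝ, u ⬝ᵥ G *ᵥ w = w ⬝ᵥ G *ᵥ u := by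
    intro u w
    rw [dotProduct_mulVec, ← mulVec_transpose, hGT, dotProduct_comm]
  -- G ≼ 1
  have hGle : ∀ x : Fin T → ℝ, x ⬝ᵥ G *ᵥ x ≤ x ⬝ᵥ x := by
    intro x
    set y := P⁻¹ *ᵥ (Qᵀ *ᵥ x) with hy
    have hs : x ⬝ᵥ G *ᵥ x = x ⬝ᵥ Q *ᵥ y := by
      rw [hGdef, ← mulVec_mulVec, ← mulVec_mulVec]
    have hPy : P *ᵥ y = Qᵀ *ᵥ x := by
      rw [hy, mulVec_mulVec, Matrix.mul_inv_of_invertible, one_mulVec]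
    have hsy : x ⬝ᵥ Q *ᵥ y = y ⬝ᵥ P *ᵥ y := by
      rw [hPy, dotProduct_mulVec, ← mulVec_transpose]
      exact dotProduct_comm _ _
    have hQy : (Q *ᵥ y) ⬝ᵥ (Q *ᵥ y) ≤ x ⬝ᵥ Q *ᵥ y := by
      have h1 := hPSD.dotProduct_mulVec_nonneg y
      rw [star_trivial, sub_mulVec, dotProduct_sub] at h1
      have h2 : y ⬝ᵥ (Qᵀ * Q) *ᵥ y = (Q *ᵥ y) ⬝ᵥ (Q *ᵥ y) := by
        rw [← mulVec_mulVec, dotProduct_mulVec, ← mulVec_transpose,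
          transpose_transpose]
      rw [h2] at h1
      rw [hsy]
      linarith
    have h0 := dot_self_nonneg (x - Q *ᵥ y)
    have hexp : (x - Q *ᵥ y) ⬝ᵥ (x - Q *ᵥ y)
        = x ⬝ᵥ x - 2 * (x ⬝ᵥ Q *ᵥ y) + (Q *ᵥ y) ⬝ᵥ (Q *ᵥ y) := by
      rw [sub_dotProduct, dotProduct_sub, dotProduct_sub]
      rw [dotProduct_comm (Q *ᵥ y) x]
      ring
    rw [hexp] at h0
    rw [hs]
    linarith
  -- bilinear form reduction helper
  have bil : ∀ (C D : Matrix (Fin n) (Fin T) ℝ) (W : Matrix (Fin T) (Fin T) ℝ)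
      (x : Fin n → ℝ), x ⬝ᵥ (C * W * Dᵀ) *ᵥ x = (Cᵀ *ᵥ x) ⬝ᵥ W *ᵥ (Dᵀ *ᵥ x) := by
    intro C D W x
    rw [← mulVec_mulVec, ← mulVec_mulVec, dotProduct_mulVec, ← mulVec_transpose,
      dotProduct_mulVec]
  have bil0 : ∀ (C D : Matrix (Fin n) (Fin T) ℝ) (x : Fin n → ℝ),
      x ⬝ᵥ (C * Dᵀ) *ᵥ x = (Cᵀ *ᵥ x) ⬝ᵥ (Dᵀ *ᵥ x) := by
    intro C D x
    rw [← mulVec_mulVec, dotProduct_mulVec, ← mulVec_transpose]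
  -- the closed loop matrix
  have hZ0QP : Z0 * (Q * P⁻¹) = 1 := by
    rw [← Matrix.mul_assoc, ← hPdef, Matrix.mul_inv_of_invertible]
  have hM : A + B * (U0 * Q * P⁻¹) = (Z1 + R0) * (Q * P⁻¹) := by
    have h1 : B * U0 = Z1 + R0 - A * Z0 := eq_sub_of_add_eq hdata
    rw [Matrix.mul_assoc U0 Q P⁻¹, ← Matrix.mul_assoc B U0 (Q * P⁻¹), h1,
      Matrix.sub_mul, Matrix.mul_assoc A Z0 (Q * P⁻¹), hZ0QP, Matrix.mul_one]
    abel
  set N := Z1 + R0 with hNdef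
  set Mmat := N * (Q * P⁻¹) with hMm
  have hMPMT : Mmat * P * Mmatᵀ = N * G * Nᵀ := by
    rw [hMm, hGdef, transpose_mul, transpose_mul, hPinvT]
    simp only [Matrix.mul_assoc]
    rw [Matrix.inv_mul_cancel_left_of_invertible]
  -- positive definiteness of P - N G Nᵀ
  have hSmat : (P - N * G * Nᵀ).PosDef := by
    rw [posDef_iff_dotProduct_mulVec]; constructor
    · have hct : (P - N * G * Nᵀ)ᴴ = (P - N * G * Nᵀ)ᵀ :=
        conjTranspose_eq_transpose_of_trivial _
      show (P - N * G * Nᵀ)ᴴ = P - N * G * Nᵀ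
      rw [hct, transpose_sub, hPs, transpose_mul, transpose_mul, hGT,
        transpose_transpose, Matrix.mul_assoc]
      simp only [hGdef, Matrix.mul_assoc]
    · intro x hx
      rw [star_trivial]
      set u := Z1ᵀ *ᵥ x with hu
      set w := R0ᵀ *ᵥ x with hw
      -- quadratic form of the Schur complement of LMI1
      have e1 : 0 < x ⬝ᵥ P *ᵥ x - α * (u ⬝ᵥ u) - u ⬝ᵥ G *ᵥ u := by
        have h := hSchur.dotProduct_mulVec_pos hx
        rw [star_trivial] at h
        have hZGZ : (Z1 * Q) * P⁻¹ * (Z1 * Q)ᴴ = Z1 * G * Z1ᵀ := by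
          rw [← hBH, hGdef]
          simp only [Matrix.mul_assoc]
        rw [hZGZ, sub_mulVec, sub_mulVec, dotProduct_sub, dotProduct_sub] at h
        rw [smul_mulVec, dotProduct_smul] at h
        rw [bil0 Z1 Z1 x, bil Z1 Z1 G x] at h
        rw [← hu] at h
        simpa using h
      have e2 : w ⬝ᵥ w ≤ γ * (u ⬝ᵥ u) := by
        have h := hγSNR.dotProduct_mulVec_nonneg x
        rw [star_trivial, sub_mulVec, dotProduct_sub, smul_mulVec,
          dotProduct_smul, bil0 Z1 Z1 x, bil0 R0 R0 x, ← hu, ← hw] at h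
        simpa using h
      have e3 : u ⬝ᵥ G *ᵥ u ≤ u ⬝ᵥ u := hGle u
      have e4 : w ⬝ᵥ G *ᵥ w ≤ w ⬝ᵥ w := hGle w
      have ha1 : 0 ≤ u ⬝ᵥ G *ᵥ u := hGnn u
      have ha2 : 0 ≤ w ⬝ᵥ G *ᵥ w := hGnn w
      have hU : 0 ≤ u ⬝ᵥ u := dot_self_nonneg u
      -- cross term bound
      have hcross : 0 ≤ (α/2) * (α/2) * (u ⬝ᵥ G *ᵥ u) - α * (u ⬝ᵥ G *ᵥ w)
          + w ⬝ᵥ G *ᵥ w := by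
        have h := hGnn ((α/2) • u - w)
        rw [mulVec_sub, mulVec_smul, sub_dotProduct, smul_dotProduct,
          dotProduct_sub, dotProduct_sub, dotProduct_smul, dotProduct_smul,
          hGsym w u] at h
        simp only [smul_eq_mul] at h
        nlinarith [h]
      -- expand the goal
      have hgoal : x ⬝ᵥ (P - N * G * Nᵀ) *ᵥ x
          = x ⬝ᵥ P *ᵥ x - (u ⬝ᵥ G *ᵥ u + 2 * (u ⬝ᵥ G *ᵥ w) + w ⬝ᵥ G *ᵥ w) := by
        rw [sub_mulVec, dotProduct_sub, bil N N G x]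
        have hNT : Nᵀ *ᵥ x = u + w := by
          rw [hNdef, transpose_add, add_mulVec, ← hu, ← hw]
        rw [hNT, mulVec_add, dotProduct_add, add_dotProduct, add_dotProduct,
          hGsym w u]
        ring
      rw [hgoal]
      -- final arithmetic
      have h4 : (0:ℝ) < 4 + 2 * α := by linarith
      have hγ' : γ * (4 + 2 * α) < α ^ 2 := (lt_div_iff₀ h4).mp hγ
      have hp1 : γ * (4 + 2 * α) * (u ⬝ᵥ u) ≤ α ^ 2 * (u ⬝ᵥ u) :=
        mul_le_mul_of_nonneg_right hγ'.le hU
      nlinarith [e1, e2, e3, e4, ha1, ha2, hU, hcross, hp1, hα,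
        mul_le_mul_of_nonneg_left e3 (sq_nonneg α),
        mul_le_mul_of_nonneg_left e2 (by linarith : (0:ℝ) ≤ 2 + α),
        mul_le_mul_of_nonneg_left e4 (by linarith : (0:ℝ) ≤ 2 + α)]
  -- conclude via Lyapunov
  rw [hM]
  have hfinal : (P - Mmat * P * Mmatᵀ).PosDef := by rwa [hMPMT]
  have hMs : (Mmat * P * Mmatᵀ)ᵀ = Mmat * P * Mmatᵀ := by
    rw [hMPMT, transpose_mul, transpose_mul, transpose_transpose, hGT,
      Matrix.mul_assoc]
    simp only [hGdef, Matrix.mul_assoc]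
  have hSs : (P - Mmat * P * Mmatᵀ)ᵀ = P - Mmat * P * Mmatᵀ := by
    rw [transpose_sub, hPs, hMs]
  exact lyapunov Mmat P hPpos hPs hMs
    (fun v => quad_map P hPs v)
    (fun v => quad_map _ hSs v) hfinal
end

section
/- Let A ∈ R^{n×n}, and let W0, W1, Z0, Z1 ∈ R^{n×T}, U0 ∈ R^{m×T}, B ∈ R^{n×m} satisfy Z1 = X1 + W1 and Z0 = X0 + W0 with X1 = A·X0 + B·U0 (equivalently, Z1 = A·Z0 + B·U0 − (A·W0 − W1)). Suppose [0; W0]·[0; W0]ᵀ ⪯ γ₁·[U0; Z0]·[U0; Z0]ᵀ with γ₁ ∈ (0, 1/2), and W1·W1ᵀ ⪯ γ₂·Z1·Z1ᵀ with γ₂ > 0. Then (A·W0 − W1)(A·W0 − W1)ᵀ ⪯ γ·Z1·Z1ᵀ where γ = (6γ₁ + 3γ₂)/(1 − 2γ₁). -/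
open Matrix

private lemma psd_smul {k : ℕ} {M : Matrix (Fin k) (Fin k) ℝ} (h : M.PosSemidef)
    (c : ℝ) (hc : 0 ≤ c) : (c • M).PosSemidef := by
  refine PosSemidef.of_dotProduct_mulVec_nonneg ?_ (fun x => ?_)
  · unfold Matrix.IsHermitian
    rw [conjTranspose_smul, h.1.eq]; simp
  · rw [smul_mulVec, dotProduct_smul]
    exact mul_nonneg hc (h.dotProduct_mulVec_nonneg x)

private lemma psd_sq {k T : ℕ} (t : ℝ) (ht : 0 < t) (X Y : Matrix (Fin k) (Fin T) ℝ) :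
    (t • (X * Xᵀ) + t⁻¹ • (Y * Yᵀ) - X * Yᵀ - Y * Xᵀ).PosSemidef := by
  have h := psd_smul (posSemidef_self_mul_conjTranspose (t • X - Y)) t⁻¹
    (by positivity)
  have he : t • (X * Xᵀ) + t⁻¹ • (Y * Yᵀ) - X * Yᵀ - Y * Xᵀ
      = t⁻¹ • ((t • X - Y) * (t • X - Y)ᴴ) := by
    rw [conjTranspose_eq_transpose_of_trivial]
    simp only [transpose_sub, transpose_smul, Matrix.sub_mul, Matrix.mul_sub,
      Matrix.smul_mul, Matrix.mul_smul, smul_smul, smul_sub]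
    match_scalars <;> field_simp
  rw [he]; exact h

theorem stmt_13 (n m T : ℕ)
    (A : Matrix (Fin n) (Fin n) ℝ) (B : Matrix (Fin n) (Fin m) ℝ)
    (W0 W1 Z0 Z1 : Matrix (Fin n) (Fin T) ℝ) (U0 : Matrix (Fin m) (Fin T) ℝ)
    (hdata : A * (Z0 - W0) + B * U0 = Z1 - W1)
    (γ₁ γ₂ : ℝ) (hγ₁ : γ₁ ∈ Set.Ioo (0 : ℝ) (1 / 2)) (hγ₂ : 0 < γ₂)
    (h1 : (γ₁ • (Matrix.fromRows U0 Z0 * (Matrix.fromRows U0 Z0)ᵀ)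
      - Matrix.fromRows (0 : Matrix (Fin m) (Fin T) ℝ) W0 *
        (Matrix.fromRows (0 : Matrix (Fin m) (Fin T) ℝ) W0)ᵀ).PosSemidef)
    (h2 : (γ₂ • (Z1 * Z1ᵀ) - W1 * W1ᵀ).PosSemidef) :
    (((6 * γ₁ + 3 * γ₂) / (1 - 2 * γ₁)) • (Z1 * Z1ᵀ)
      - (A * W0 - W1) * (A * W0 - W1)ᵀ).PosSemidef := by
  obtain ⟨hγ₁0, hγ₁2⟩ := hγ₁
  have hden : (0:ℝ) < 1 - 2 * γ₁ := by linarith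
  set M : Matrix (Fin n) (Fin m ⊕ Fin n) ℝ := fromCols B A with hM
  set V : Matrix (Fin m ⊕ Fin n) (Fin T) ℝ := fromRows U0 Z0 with hV
  set S : Matrix (Fin m ⊕ Fin n) (Fin T) ℝ :=
    fromRows (0 : Matrix (Fin m) (Fin T) ℝ) W0 with hS
  have hMS : M * S = A * W0 := by
    rw [hM, hS, fromCols_mul_fromRows]; simp
  have hMV : M * V = Z1 + (A * W0 - W1) := by
    rw [hM, hV, fromCols_mul_fromRows]
    rw [Matrix.mul_sub] at hdata
    have : A * Z0 = Z1 - W1 + A * W0 - B * U0 := by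
      rw [← hdata]; abel
    rw [this]; abel
  -- conjugate h1 by M
  have hD1 : (γ₁ • ((M * V) * (M * V)ᵀ) - (M * S) * (M * S)ᵀ).PosSemidef := by
    have h := h1.mul_mul_conjTranspose_same M
    have he : M * (γ₁ • (V * Vᵀ) - S * Sᵀ) * Mᴴ
        = γ₁ • ((M * V) * (M * V)ᵀ) - (M * S) * (M * S)ᵀ := by
      rw [conjTranspose_eq_transpose_of_trivial, Matrix.mul_sub, Matrix.sub_mul,
        Matrix.mul_smul, Matrix.smul_mul, transpose_mul, transpose_mul,
        Matrix.mul_assoc, Matrix.mul_assoc, Matrix.mul_assoc, Matrix.mul_assoc]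
      simp only [Matrix.mul_assoc]
    rw [he] at h
    exact h
  rw [hMS, hMV] at hD1
  set P : Matrix (Fin n) (Fin T) ℝ := A * W0 with hP
  set R : Matrix (Fin n) (Fin T) ℝ := P - W1 with hR
  have hE1 := psd_sq (1/2) (by norm_num) P (-W1)
  have hE2 := psd_sq 3 (by norm_num) Z1 R
  -- the key identity
  have key : (6 * γ₁ + 3 * γ₂) • (Z1 * Z1ᵀ) - (1 - 2 * γ₁) • (R * Rᵀ)
      = ((3/2) * γ₁) • ((3:ℝ) • (Z1 * Z1ᵀ) + (3:ℝ)⁻¹ • (R * Rᵀ) - Z1 * Rᵀ - R * Z1ᵀ)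
        + (3/2 : ℝ) • (γ₁ • ((Z1 + R) * (Z1 + R)ᵀ) - P * Pᵀ)
        + (3 : ℝ) • (γ₂ • (Z1 * Z1ᵀ) - W1 * W1ᵀ)
        + ((1/2 : ℝ) • (P * Pᵀ) + (1/2 : ℝ)⁻¹ • ((-W1) * (-W1)ᵀ)
            - P * (-W1)ᵀ - (-W1) * Pᵀ) := by
    rw [hR]
    simp only [transpose_add, transpose_sub, transpose_neg, Matrix.add_mul,
      Matrix.mul_add, Matrix.sub_mul, Matrix.mul_sub, Matrix.neg_mul,
      Matrix.mul_neg, neg_neg]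
    module
  have hsum : ((6 * γ₁ + 3 * γ₂) • (Z1 * Z1ᵀ) - (1 - 2 * γ₁) • (R * Rᵀ)).PosSemidef := by
    rw [key]
    exact (((psd_smul hE2 ((3/2) * γ₁) (by positivity)).add
      (psd_smul hD1 (3/2) (by norm_num))).add
      (psd_smul h2 3 (by norm_num))).add hE1
  have hfinal : ((6 * γ₁ + 3 * γ₂) / (1 - 2 * γ₁)) • (Z1 * Z1ᵀ) - R * Rᵀ
      = (1 - 2 * γ₁)⁻¹ • ((6 * γ₁ + 3 * γ₂) • (Z1 * Z1ᵀ) - (1 - 2 * γ₁) • (R * Rᵀ)) := by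
    rw [smul_sub, smul_smul, smul_smul, inv_mul_cancel₀ hden.ne', one_smul,
      div_eq_inv_mul]
  rw [hfinal]
  exact psd_smul hsum _ (by positivity)
end

section
/- Let A ∈ R^{n×n}, B ∈ R^{n×m}, U0 ∈ R^{m×T}, X0 ∈ R^{n×T} with [U0; X0] full row rank, X1 := B·U0 + A·X0 (continuous-time data: X1 contains state derivatives so that A + B·K = X1·G for G satisfying [U0;X0]G=[K;I]). If Q ∈ R^{T×n} satisfies X1·Q + Qᵀ·X1ᵀ ≺ 0 and X0·Q ≻ 0, then K := U0·Q·(X0·Q)^{-1} makes A + B·K Hurwitz (all eigenvalues have negative real part). -/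
open Matrix

/-- A real square matrix is Hurwitz if all of its (complex) eigenvalues
have strictly negative real part. -/
def Hurwitz {n : ℕ} (M : Matrix (Fin n) (Fin n) ℝ) : Prop :=
  ∀ μ ∈ spectrum ℂ (M.map (algebraMap ℝ ℂ)), μ.re < 0

private lemma map_mulVec_star {n : ℕ} (R : Matrix (Fin n) (Fin n) ℝ) (v : Fin n → ℂ) :
    (R.map (algebraMap ℝ ℂ)) *ᵥ (star v) = star ((R.map (algebraMap ℝ ℂ)) *ᵥ v) := by
  funext i
  simp [mulVec, dotProduct, map_sum, Matrix.map_apply]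

private lemma quad_re {n : ℕ} (R : Matrix (Fin n) (Fin n) ℝ) (v : Fin n → ℂ) :
    (star v ⬝ᵥ ((R.map (algebraMap ℝ ℂ)) *ᵥ v)).re =
      (fun i => (v i).re) ⬝ᵥ (R *ᵥ fun i => (v i).re) +
      (fun i => (v i).im) ⬝ᵥ (R *ᵥ fun i => (v i).im) := by
  simp only [dotProduct, mulVec, Matrix.map_apply, Pi.star_apply, Complex.re_sum,
    Finset.mul_sum, ← Finset.sum_add_distrib]
  refine Finset.sum_congr rfl fun i _ => ?_
  refine Finset.sum_congr rfl fun j _ => ?_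
  simp [Complex.mul_re, Complex.mul_im]

/-- Lyapunov: if P ≻ 0 and M P + P Mᵀ ≺ 0 then M is Hurwitz. -/
private lemma lyapunov_s16 {n : ℕ} (M P : Matrix (Fin n) (Fin n) ℝ)
    (hP : P.PosDef) (hS : (-(M * P + P * Mᵀ)).PosDef) : Hurwitz M := by
  intro μ hμ
  set N := M.map (algebraMap ℝ ℂ) with hN
  -- get a left eigenvector
  have hdet : ((μ • (1 : Matrix (Fin n) (Fin n) ℂ)) - N).det = 0 := by
    by_contra hne
    exact (spectrum.mem_iff.mp hμ) (by
      have : IsUnit ((μ • (1 : Matrix (Fin n) (Fin n) ℂ)) - N).det := Ne.isUnit hne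
      simpa [Algebra.algebraMap_eq_smul_one] using (Matrix.isUnit_iff_isUnit_det _).mpr this)
  have hdetT : ((μ • (1 : Matrix (Fin n) (Fin n) ℂ)) - Nᵀ).det = 0 := by
    rw [← Matrix.det_transpose] at hdet
    simpa [Matrix.transpose_sub, Matrix.transpose_smul] using hdet
  obtain ⟨v, hv0, hveq⟩ := (Matrix.exists_mulVec_eq_zero_iff).mpr hdetT
  have heig : Nᵀ *ᵥ v = μ • v := by
    have := hveq
    rw [Matrix.sub_mulVec, sub_eq_zero] at this
    rw [← this, Matrix.smul_mulVec, Matrix.one_mulVec]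
  -- quadratic forms
  set x : Fin n → ℝ := fun i => (v i).re
  set y : Fin n → ℝ := fun i => (v i).im
  have hxy : x ≠ 0 ∨ y ≠ 0 := by
    by_contra h
    push_neg at h
    apply hv0
    funext i
    have hx := congrFun h.1 i
    have hy := congrFun h.2 i
    exact Complex.ext (by simpa [x] using hx) (by simpa [y] using hy)
  set Pc := P.map (algebraMap ℝ ℂ) with hPc
  set s := star v ⬝ᵥ (Pc *ᵥ v) with hs
  -- s.re > 0
  have hsre : 0 < s.re := by
    rw [hs, quad_re]
    rcases hxy with hx | hy
    · have h1 := hP.dotProduct_mulVec_pos hx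
      have h2 := hP.posSemidef.dotProduct_mulVec_nonneg y
      simp only [star_trivial] at h1 h2
      linarith
    · have h1 := hP.posSemidef.dotProduct_mulVec_nonneg x
      have h2 := hP.dotProduct_mulVec_pos hy
      simp only [star_trivial] at h1 h2
      linarith
  -- the combined quadratic form
  have key : star v ⬝ᵥ (((M * P + P * Mᵀ).map (algebraMap ℝ ℂ)) *ᵥ v)
      = ((starRingEnd ℂ) μ + μ) * s := by
    have hmap : (M * P + P * Mᵀ).map (algebraMap ℝ ℂ) = N * Pc + Pc * Nᵀ := by
      ext i j
      simp [Matrix.mul_apply, Matrix.map_apply, Matrix.add_apply, hN, hPc]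
    rw [hmap, Matrix.add_mulVec, dotProduct_add]
    have t1 : star v ⬝ᵥ ((N * Pc) *ᵥ v) = (starRingEnd ℂ) μ * s := by
      rw [← Matrix.mulVec_mulVec, Matrix.dotProduct_mulVec, ← Matrix.mulVec_transpose]
      have h1 : Nᵀ *ᵥ star v = star (Nᵀ *ᵥ v) := by
        rw [hN, ← Matrix.transpose_map]; exact map_mulVec_star Mᵀ v
      rw [h1, heig, star_smul, smul_dotProduct, hs]
      simp [smul_eq_mul]
    have t2 : star v ⬝ᵥ ((Pc * Nᵀ) *ᵥ v) = μ * s := by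
      rw [← Matrix.mulVec_mulVec, heig, Matrix.mulVec_smul, dotProduct_smul, hs, smul_eq_mul]
    rw [t1, t2]
    ring
  -- take real parts
  have hre : (star v ⬝ᵥ (((M * P + P * Mᵀ).map (algebraMap ℝ ℂ)) *ᵥ v)).re < 0 := by
    rw [quad_re]
    set S := -(M * P + P * Mᵀ) with hSdef
    have hMP : M * P + P * Mᵀ = -S := by simp [hSdef]
    rw [hMP]
    simp only [Matrix.neg_mulVec, dotProduct_neg]
    rcases hxy with hx | hy
    · have h1 := hS.dotProduct_mulVec_pos hx
      have h2 := hS.posSemidef.dotProduct_mulVec_nonneg y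
      simp only [star_trivial] at h1 h2
      linarith
    · have h1 := hS.posSemidef.dotProduct_mulVec_nonneg x
      have h2 := hS.dotProduct_mulVec_pos hy
      simp only [star_trivial] at h1 h2
      linarith
  rw [key] at hre
  have hconj : (starRingEnd ℂ) μ + μ = ((2 * μ.re : ℝ) : ℂ) := by
    apply Complex.ext <;> simp [Complex.add_re, Complex.add_im] <;> ring
  rw [hconj] at hre
  simp only [Complex.mul_re, Complex.ofReal_re, Complex.ofReal_im, zero_mul, sub_zero] at hre
  nlinarith

theorem stmt_16 (n m T : ℕ)
    (A : Matrix (Fin n) (Fin n) ℝ) (B : Matrix (Fin n) (Fin m) ℝ)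
    (U0 : Matrix (Fin m) (Fin T) ℝ) (X0 : Matrix (Fin n) (Fin T) ℝ)
    (hrank : (Matrix.fromRows U0 X0).rank = m + n)
    (X1 : Matrix (Fin n) (Fin T) ℝ) (hX1 : X1 = B * U0 + A * X0)
    (Q : Matrix (Fin T) (Fin n) ℝ)
    (h1 : (-(X1 * Q + Qᵀ * X1ᵀ)).PosDef)
    (h2 : (X0 * Q).PosDef) :
    Hurwitz (A + B * (U0 * Q * (X0 * Q)⁻¹)) := by
  set P := X0 * Q with hPdef
  set M := A + B * (U0 * Q * P⁻¹) with hMdef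
  have hPinv : P⁻¹ * P = 1 := Matrix.nonsing_inv_mul P h2.det_pos.ne'.isUnit
  have hMP : M * P = X1 * Q := by
    have hB : B * (U0 * Q * P⁻¹) * P = B * (U0 * Q) := by
      rw [Matrix.mul_assoc, Matrix.mul_assoc (U0 * Q), hPinv, Matrix.mul_one]
    rw [hMdef, Matrix.add_mul, hB, hX1, hPdef, Matrix.add_mul,
      Matrix.mul_assoc, Matrix.mul_assoc, add_comm]
  have hPsymm : Pᵀ = P := h2.1
  have hS : -(M * P + P * Mᵀ) = -(X1 * Q + Qᵀ * X1ᵀ) := by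
    have hPM : P * Mᵀ = (M * P)ᵀ := by
      rw [Matrix.transpose_mul, hPsymm]
    rw [hPM, hMP, Matrix.transpose_mul]
  exact lyapunov_s16 M P h2 (hS ▸ h1)
end

section
/- Let Q ∈ R^{T×n}, and let X0, X1 ∈ R^{n×T} with X0·Q ≻ 0. If the block matrix [[X0·Q − I_n, X1·Q],[Qᵀ·X1ᵀ, X0·Q]] ⪰ 0, then, setting W := X0·Q and M := X1·Q·W^{-1}, we have M·W·Mᵀ − W + I_n ⪯ 0 and W ⪰ I_n. -/
open Matrix

theorem stmt_19 (n T : ℕ) (X0 X1 : Matrix (Fin n) (Fin T) ℝ)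
    (Q : Matrix (Fin T) (Fin n) ℝ) (hW : (X0 * Q).PosDef)
    (hLMI : (Matrix.fromBlocks (X0 * Q - 1) (X1 * Q)
        (Qᵀ * X1ᵀ) (X0 * Q)).PosSemidef) :
    let W := X0 * Q
    let M := X1 * Q * W⁻¹
    (-(M * W * Mᵀ - W + 1)).PosSemidef ∧ (W - 1).PosSemidef := by
  intro W M
  haveI : Invertible W := hW.isUnit.invertible
  have hB : (X1 * Q)ᴴ = Qᵀ * X1ᵀ := by
    rw [conjTranspose_mul, conjTranspose_eq_transpose_of_trivial,
      conjTranspose_eq_transpose_of_trivial]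
  have hschur : ((W - 1) - (X1 * Q) * W⁻¹ * (X1 * Q)ᴴ).PosSemidef := by
    rw [← Matrix.PosDef.fromBlocks₂₂ _ _ hW]
    rw [hB]
    exact hLMI
  have hWsymm : W⁻¹ᵀ = W⁻¹ := by
    rw [transpose_nonsing_inv, ← conjTranspose_eq_transpose_of_trivial, hW.isHermitian.eq]
  have hMW : M * W * Mᵀ = (X1 * Q) * W⁻¹ * (X1 * Q)ᴴ := by
    show X1 * Q * W⁻¹ * W * (X1 * Q * W⁻¹)ᵀ = _
    rw [transpose_mul, hWsymm]
    rw [Matrix.mul_assoc (X1 * Q) W⁻¹ W, Matrix.nonsing_inv_mul _ (isUnit_det_of_invertible W),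
      Matrix.mul_one, hB]
    rw [← conjTranspose_eq_transpose_of_trivial (X1 * Q), hB]
    simp only [Matrix.mul_assoc]
  constructor
  · have : -(M * W * Mᵀ - W + 1) = (W - 1) - (X1 * Q) * W⁻¹ * (X1 * Q)ᴴ := by
      rw [hMW]; abel
    rw [this]; exact hschur
  · have hψ : ((X1 * Q) * W⁻¹ * (X1 * Q)ᴴ).PosSemidef :=
      (hW.inv.posSemidef).mul_mul_conjTranspose_same (X1 * Q)
    have := hschur.add hψ
    simpa using this
end
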